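/- arXiv:0907.3932 — 3 statements merged into one kernel-verified Lean document; each statement's English description precedes it below -/
import Mathlib

section
/- Equality in the Bliss lemma: For q > p > 1, r = q/p - 1, and g(s) = (c·s^r + 1)^{-(r+1)/r} with c > 0, equality holds: [∫₀^∞ (∫₀^s g(t) dt)^q s^{r-q} ds]^{p/q} = K · ∫₀^∞ g(s)^p ds, with K = (q - r - 1)^{-p/q} [ r Γ(q/r) / (Γ(1/r)Γ((q-1)/r)) ]^{rp/q}. -/
/-!
The inner integral has the explicit primitive `s (c s^r + 1)^(-1/r)`. With it, both sides become
integrals of `s^(a-1) (c s^r + 1)^(-q/r)` over `(0, ∞)` (with `a = r + 1` and `a = 1`), which the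
substitutions `u = c s^r` and `u = x / (1 - x)` (from `(0, 1)` onto `(0, ∞)`) turn into the Beta
values `B(1/r + 1, (q-1)/r - 1)` and `B(1/r, (q-1)/r)`; by `Γ(x + 1) = x Γ(x)` these differ by
the factor `q - r - 1`, and the powers of `c` agree because `(r + 1) p = q`.
-/

open MeasureTheory Real Set ProbabilityTheory

theorem integral_Ioo_rpow_mul_one_sub_rpow {a b : ℝ} (ha : 0 < a) (hb : 0 < b) :
    ∫ x in Ioo (0:ℝ) 1, x ^ (a - 1) * (1 - x) ^ (b - 1) = beta a b := by
  have hcomplex : Complex.betaIntegral a b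
      = ((∫ x in (0:ℝ)..1, x ^ (a - 1) * (1 - x) ^ (b - 1) : ℝ) : ℂ) := by
    rw [Complex.betaIntegral, ← intervalIntegral.integral_ofReal]
    refine intervalIntegral.integral_congr fun x hx => ?_
    rw [uIcc_of_le zero_le_one] at hx
    push_cast
    rw [Complex.ofReal_cpow hx.1, Complex.ofReal_cpow (sub_nonneg.2 hx.2)]
    push_cast
    ring_nf
  rw [beta_eq_betaIntegralReal a b ha hb, hcomplex, Complex.ofReal_re,
    intervalIntegral.integral_of_le zero_le_one, integral_Ioc_eq_integral_Ioo]

theorem image_div_one_sub_Ioo : (fun x : ℝ => x / (1 - x)) '' Ioo 0 1 = Ioi 0 := by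
  ext t
  constructor
  · rintro ⟨x, hx, rfl⟩
    exact div_pos hx.1 (sub_pos.2 hx.2)
  · intro (ht : 0 < t)
    refine ⟨t / (1 + t), ⟨by positivity, (div_lt_one (by positivity)).2 (by linarith)⟩, ?_⟩
    field_simp
    ring

theorem integral_Ioi_rpow_mul_one_add_rpow {a b : ℝ} (ha : 0 < a) (hb : 0 < b) :
    ∫ t in Ioi (0:ℝ), t ^ (a - 1) * (1 + t) ^ (-(a + b)) = beta a b := by
  have hderiv : ∀ x ∈ Ioo (0:ℝ) 1,
      HasDerivWithinAt (fun x => x / (1 - x)) ((1 - x) ^ 2)⁻¹ (Ioo 0 1) x := by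
    intro x hx
    have h := (hasDerivAt_id' x).div ((hasDerivAt_id' x).const_sub 1) (sub_pos.2 hx.2).ne'
    rw [show (1 * (1 - x) - x * -1) / (1 - x) ^ 2 = ((1 - x) ^ 2)⁻¹ by ring] at h
    exact h.hasDerivWithinAt
  have hinj : InjOn (fun x : ℝ => x / (1 - x)) (Ioo 0 1) := by
    intro x hx y hy hxy
    have := (sub_pos.2 hx.2).ne'
    have := (sub_pos.2 hy.2).ne'
    field_simp at hxy
    linarith
  rw [← image_div_one_sub_Ioo, integral_image_eq_integral_abs_deriv_smul measurableSet_Ioo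
    hderiv hinj, ← integral_Ioo_rpow_mul_one_sub_rpow ha hb]
  refine setIntegral_congr_fun measurableSet_Ioo fun x ⟨hx0, hx1⟩ => ?_
  have h1x : 0 < 1 - x := sub_pos.2 hx1
  have hsum : 1 + x / (1 - x) = (1 - x)⁻¹ := by field_simp; ring
  have hsq : ((1 - x) ^ 2)⁻¹ = (1 - x) ^ (-2 : ℝ) := by
    rw [rpow_neg h1x.le, rpow_two]
  rw [smul_eq_mul, abs_of_pos (by positivity), hsum, div_rpow hx0.le h1x.le,
    inv_rpow h1x.le, ← rpow_neg h1x.le, neg_neg, hsq]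
  calc (1 - x) ^ (-2 : ℝ) * (x ^ (a - 1) / (1 - x) ^ (a - 1) * (1 - x) ^ (a + b))
      = x ^ (a - 1) * ((1 - x) ^ (-2 : ℝ) * (1 - x) ^ (a + b) / (1 - x) ^ (a - 1)) := by
        ring
    _ = x ^ (a - 1) * (1 - x) ^ (b - 1) := by
        rw [← rpow_add h1x, ← rpow_sub h1x]
        ring_nf

theorem integral_Ioi_rpow_mul_mul_add_one_rpow {a b c : ℝ} (ha : 0 < a) (hab : a < b)
    (hc : 0 < c) :
    ∫ t in Ioi (0:ℝ), t ^ (a - 1) * (c * t + 1) ^ (-b) = c ^ (-a) * beta a (b - a) := by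
  have hscale := integral_comp_mul_left_Ioi' (fun t => t ^ (a - 1) * (1 + t) ^ (-b)) 0 hc
  have hbeta : ∫ t in Ioi (0:ℝ), t ^ (a - 1) * (1 + t) ^ (-b) = beta a (b - a) := by
    simpa using integral_Ioi_rpow_mul_one_add_rpow ha (sub_pos.2 hab)
  rw [mul_zero, hbeta, smul_eq_mul, ← integral_const_mul] at hscale
  rw [← hscale, ← integral_const_mul]
  refine setIntegral_congr_fun measurableSet_Ioi fun t (ht : 0 < t) => ?_
  have hcpow : c ^ (-a) * (c * c ^ (a - 1)) = 1 := by
    rw [mul_comm c, ← rpow_add_one hc.ne', ← rpow_add hc]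
    norm_num
  rw [mul_rpow hc.le ht.le, add_comm 1]
  linear_combination (-(t ^ (a - 1) * (c * t + 1) ^ (-b))) * hcpow

theorem integral_Ioi_rpow_mul_mul_rpow_add_one_rpow {a b c r : ℝ} (ha : 0 < a) (hr : 0 < r)
    (hab : a / r < b) (hc : 0 < c) :
    ∫ s in Ioi (0:ℝ), s ^ (a - 1) * (c * s ^ r + 1) ^ (-b)
      = c ^ (-(a / r)) * beta (a / r) (b - a / r) / r := by
  have hsubst := integral_comp_rpow_Ioi_of_pos
    (g := fun u => u ^ (a / r - 1) * (c * u + 1) ^ (-b)) hr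
  rw [integral_Ioi_rpow_mul_mul_add_one_rpow (div_pos ha hr) hab hc] at hsubst
  rw [eq_div_iff hr.ne', ← hsubst, ← integral_mul_const]
  refine setIntegral_congr_fun measurableSet_Ioi fun s (hs : 0 < s) => ?_
  have hpow : s ^ (r - 1) * (s ^ r) ^ (a / r - 1) = s ^ (a - 1) := by
    rw [← rpow_mul hs.le, ← rpow_add hs]
    congr 1
    field_simp
    ring
  simp only [smul_eq_mul]
  linear_combination (-(r * (c * s ^ r + 1) ^ (-b))) * hpow

theorem beta_add_one_sub_one {a b : ℝ} (ha : a ≠ 0) (hb : b ≠ 1) :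
    beta (a + 1) (b - 1) = a / (b - 1) * beta a b := by
  have hGb : Gamma b = (b - 1) * Gamma (b - 1) := by
    rw [← Gamma_add_one (sub_ne_zero.2 hb), sub_add_cancel]
  rw [beta, beta, Gamma_add_one ha, hGb, show a + 1 + (b - 1) = a + b by ring]
  field_simp

noncomputable def blissExtremal (c r s : ℝ) : ℝ := (c * s ^ r + 1) ^ (-(r + 1) / r)

theorem hasDerivAt_mul_mul_rpow_add_one_rpow {c r x : ℝ} (hc : 0 ≤ c) (hr : r ≠ 0)
    (hx : 0 < x) :
    HasDerivAt (fun x => x * (c * x ^ r + 1) ^ (-1 / r)) (blissExtremal c r x) x := by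
  have hB : 0 < c * x ^ r + 1 := by positivity
  have h := (hasDerivAt_id' x).mul
    (((hasDerivAt_rpow_const (p := r) (Or.inl hx.ne')).const_mul c).add_const 1
      |>.rpow_const (p := -1 / r) (Or.inl hB.ne'))
  have hxr : x * x ^ (r - 1) = x ^ r := by
    rw [mul_comm x, ← rpow_add_one hx.ne', sub_add_cancel]
  have hB1 : (c * x ^ r + 1) ^ (-1 / r) = (c * x ^ r + 1) * (c * x ^ r + 1) ^ (-1 / r - 1) := by
    rw [mul_comm (c * x ^ r + 1), ← rpow_add_one hB.ne', sub_add_cancel]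
  have hval : 1 * (c * x ^ r + 1) ^ (-1 / r)
      + x * (c * (r * x ^ (r - 1)) * (-1 / r) * (c * x ^ r + 1) ^ (-1 / r - 1))
      = blissExtremal c r x := by
    rw [blissExtremal, show -(r + 1) / r = -1 / r - 1 by field_simp; ring, hB1,
      show c * (r * x ^ (r - 1)) * (-1 / r) = -(c * x ^ (r - 1)) by field_simp]
    linear_combination (-(c * (c * x ^ r + 1) ^ (-1 / r - 1))) * hxr
  rwa [hval] at h

theorem integral_Ioc_blissExtremal {c r s : ℝ} (hc : 0 ≤ c) (hr : 0 < r) (hs : 0 ≤ s) :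
    ∫ t in Ioc 0 s, blissExtremal c r t = s * (c * s ^ r + 1) ^ (-1 / r) := by
  have hcont : ∀ e : ℝ, ContinuousOn (fun t => (c * t ^ r + 1) ^ e) (Icc 0 s) := fun e =>
    ContinuousOn.rpow_const (by fun_prop (disch := positivity))
      fun t ht => Or.inl (by have := ht.1; positivity)
  have hFTC := intervalIntegral.integral_eq_sub_of_hasDeriv_right_of_le hs
    (continuousOn_id.mul (hcont _))
    (fun x hx => (hasDerivAt_mul_mul_rpow_add_one_rpow hc hr.ne' hx.1).hasDerivWithinAt)
    ((hcont _).intervalIntegrable_of_Icc hs)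
  rw [intervalIntegral.integral_of_le hs] at hFTC
  simpa [zero_rpow hr.ne'] using hFTC

theorem integral_Ioi_integral_blissExtremal_rpow_mul_rpow {c q r : ℝ} (hc : 0 < c) (hr : 0 < r)
    (hq : r + 1 < q) :
    ∫ s in Ioi (0:ℝ), (∫ t in Ioc 0 s, blissExtremal c r t) ^ q * s ^ (r - q)
      = c ^ (-((r + 1) / r)) * (beta (1 / r) ((q - 1) / r) / r) / (q - r - 1) := by
  have hintegrand : ∀ s ∈ Ioi (0:ℝ), (∫ t in Ioc 0 s, blissExtremal c r t) ^ q * s ^ (r - q)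
      = s ^ ((r + 1) - 1) * (c * s ^ r + 1) ^ (-(q / r)) := fun s (hs : 0 < s) => by
    rw [integral_Ioc_blissExtremal hc.le hr hs.le, mul_rpow hs.le (by positivity),
      ← rpow_mul (by positivity), mul_right_comm, ← rpow_add hs]
    congr 2 <;> ring
  have hbeta : beta ((r + 1) / r) (q / r - (r + 1) / r)
      = beta (1 / r) ((q - 1) / r) / (q - r - 1) := by
    rw [show (r + 1) / r = 1 / r + 1 by field_simp; ring,
      show q / r - (1 / r + 1) = (q - 1) / r - 1 by field_simp; ring,
      beta_add_one_sub_one (by positivity) (by rw [ne_eq, div_eq_one_iff_eq hr.ne']; linarith),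
      show (q - 1) / r - 1 = (q - r - 1) / r by field_simp; ring]
    field_simp
  rw [setIntegral_congr_fun measurableSet_Ioi hintegrand,
    integral_Ioi_rpow_mul_mul_rpow_add_one_rpow (by positivity) hr
      ((div_lt_div_iff_of_pos_right hr).2 hq) hc, hbeta]
  ring

theorem integral_Ioi_blissExtremal_rpow {c p q r : ℝ} (hc : 0 < c) (hr : 0 < r)
    (hpq : q = p * (r + 1)) (hq : 1 < q) :
    ∫ s in Ioi (0:ℝ), blissExtremal c r s ^ p
      = c ^ (-(1 / r)) * (beta (1 / r) ((q - 1) / r) / r) := by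
  have hintegrand : ∀ s ∈ Ioi (0:ℝ), blissExtremal c r s ^ p
      = s ^ ((1:ℝ) - 1) * (c * s ^ r + 1) ^ (-(q / r)) := fun s (hs : 0 < s) => by
    rw [blissExtremal, ← rpow_mul (by positivity), sub_self, rpow_zero, one_mul, hpq]
    congr 1
    field_simp
  rw [setIntegral_congr_fun measurableSet_Ioi hintegrand,
    integral_Ioi_rpow_mul_mul_rpow_add_one_rpow one_pos hr
      ((div_lt_div_iff_of_pos_right hr).2 hq) hc, show q / r - 1 / r = (q - 1) / r by ring]
  ring

theorem bliss_constant_eq {c J D p q r : ℝ} (hc : 0 < c) (hJ : 0 < J) (hD : 0 < D)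
    (hr : r ≠ 0) (hpq : q = p * (r + 1)) (hq : q ≠ 0) :
    (c ^ (-((r + 1) / r)) * J / D) ^ (p / q)
      = (D ^ (-(p / q)) * J⁻¹ ^ (r * p / q)) * (c ^ (-(1 / r)) * J) := by
  subst hpq
  obtain ⟨hp, hr1⟩ := mul_ne_zero_iff.1 hq
  have hcexp : -((r + 1) / r) * (p / (p * (r + 1))) = -(1 / r) := by
    field_simp
  have hJexp : p / (p * (r + 1)) = -(r * p / (p * (r + 1))) + 1 := by
    field_simp
    ring
  rw [div_rpow (by positivity) hD.le, mul_rpow (by positivity) hJ.le, ← rpow_mul hc.le, hcexp,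
    inv_rpow hJ.le, ← rpow_neg hJ.le, hJexp, rpow_add_one hJ.ne', rpow_neg hD.le]
  ring

theorem stmt2 (p q r c : ℝ) (hp : 1 < p) (hpq : p < q) (hr : r = q / p - 1)
    (hc : 0 < c) (g : ℝ → ℝ)
    (hgdef : ∀ s, g s = (c * s ^ r + 1) ^ (-(r+1)/r)) :
    (∫ s in Ioi (0:ℝ), (∫ t in Ioc (0:ℝ) s, g t) ^ q * s ^ (r - q)) ^ (p/q) =
      ((q - r - 1) ^ (-(p/q)) *
        (r * Gamma (q/r) / (Gamma (1/r) * Gamma ((q-1)/r))) ^ (r * p / q)) *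
      ∫ s in Ioi (0:ℝ), g s ^ p := by
  have hp0 : 0 < p := by linarith
  have hr0 : 0 < r := by rw [hr, sub_pos, one_lt_div hp0]; exact hpq
  have hq : q = p * (r + 1) := by rw [hr]; field_simp; ring
  have hD : 0 < q - r - 1 := by nlinarith
  have hβ : 0 < beta (1 / r) ((q - 1) / r) :=
    beta_pos (by positivity) (div_pos (by linarith) hr0)
  have hK : r * Gamma (q / r) / (Gamma (1 / r) * Gamma ((q - 1) / r))
      = (beta (1 / r) ((q - 1) / r) / r)⁻¹ := by
    rw [beta, show 1 / r + (q - 1) / r = q / r by ring, inv_div, div_div_eq_mul_div]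
  obtain rfl : g = blissExtremal c r := funext hgdef
  rw [integral_Ioi_integral_blissExtremal_rpow_mul_rpow hc hr0 (by linarith),
    integral_Ioi_blissExtremal_rpow hc hr0 hq (by linarith), hK]
  exact bliss_constant_eq hc (div_pos hβ hr0) hD hr0.ne' hq (by linarith)
end

section
/- Young's inequality for the exponential density: For 1 < p < 2, 1/p + 1/p' = 1, φ(x) = e^{-|x|}, and every f ∈ L^p(ℝ), ‖φ * f‖_{L^{p'}(ℝ)} ≤ A_p ‖f‖_{L^p(ℝ)} with A_p = (p'/2)^{2/p} [ Γ(2p/(2-p)) / (Γ(2/(2-p)) Γ(p/(2-p))) ]^{2/p - 1}. -/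
/-!
Interpolation between two elementary bounds for `g = φ * f`: Hölder gives
`‖g‖_∞ ≤ ‖φ‖_{p'} ‖f‖_p`, Schur's test gives `‖g‖_p ≤ ‖φ‖₁ ‖f‖_p`, and
`‖g‖_{p'}^{p'} ≤ ‖g‖_∞^{p' - p} ‖g‖_p^p` (here `p ≤ 2 ≤ p'`). With `‖φ‖₁ = 2` and
`‖φ‖_{p'}^{p'} = 2 / p'` this yields the constant `2^{p-1} (2/p')^{(2-p)/p'}`, which is at most
`A_p`: writing `b = p / (2 - p) > 1`, the Gamma ratio in `A_p` is `Γ(2b) / (Γ(b+1) Γ(b))`, which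
the duplication formula and the log-convexity of `Γ` bound below by `2^{b-1} / e`, and the factor
`e^{1/b}` is absorbed by `e^{1/b} ≤ b / (b - 1) = p' / 2`.
-/

open MeasureTheory Real Set
open scoped ENNReal

theorem integrable_exp_neg_mul_abs {c : ℝ} (hc : 0 < c) :
    Integrable (fun y : ℝ => exp (-(c * |y|))) := by
  have hIoi : IntegrableOn (fun y : ℝ => exp (-(c * |y|))) (Ioi 0) :=
    (integrableOn_exp_mul_Ioi (neg_lt_zero.mpr hc) 0).congr_fun
      (fun y hy => by simp [abs_of_pos (mem_Ioi.mp hy)]) measurableSet_Ioi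
  have hIic : IntegrableOn (fun y : ℝ => exp (-(c * |y|))) (Iic 0) :=
    (integrableOn_exp_mul_Iic hc 0).congr_fun
      (fun y hy => by simp [abs_of_nonpos (mem_Iic.mp hy)]) measurableSet_Iic
  rw [← integrableOn_univ, ← Iic_union_Ioi (a := (0 : ℝ))]
  exact hIic.union hIoi

theorem integral_exp_neg_mul_abs {c : ℝ} (hc : 0 < c) :
    ∫ y : ℝ, exp (-(c * |y|)) = 2 / c := by
  rw [integral_comp_abs (f := fun y => exp (-(c * y)))]
  simp_rw [← neg_mul]
  rw [integral_exp_mul_Ioi (neg_lt_zero.mpr hc)]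
  field_simp
  simp

theorem lintegral_exp_neg_mul_abs_sub {c : ℝ} (hc : 0 < c) (x : ℝ) :
    ∫⁻ y, ENNReal.ofReal (exp (-(c * |y - x|))) = ENNReal.ofReal (2 / c) := by
  rw [lintegral_sub_right_eq_self (fun y => ENNReal.ofReal (exp (-(c * |y|)))) x,
    ← ofReal_integral_eq_lintegral_ofReal (integrable_exp_neg_mul_abs hc)
      (ae_of_all _ fun _ => (exp_pos _).le), integral_exp_neg_mul_abs hc]

theorem lintegral_enorm_exp_neg_abs_sub_rpow {c : ℝ} (hc : 0 < c) (x : ℝ) :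
    ∫⁻ y, ‖exp (-|x - y|)‖ₑ ^ c = ENNReal.ofReal (2 / c) := by
  have h : ∀ y, ‖exp (-|x - y|)‖ₑ ^ c = ENNReal.ofReal (exp (-(c * |y - x|))) := fun y => by
    rw [enorm_eq_ofReal (exp_pos _).le, ENNReal.ofReal_rpow_of_pos (exp_pos _), ← exp_mul,
      abs_sub_comm]
    ring_nf
  simp_rw [h]
  exact lintegral_exp_neg_mul_abs_sub hc x

section KernelEstimates

variable {α β : Type*} [MeasurableSpace α] [MeasurableSpace β] {μ : Measure α} {ν : Measure β}

theorem lintegral_rpow_le_mul_lintegral_rpow {G : α → ℝ≥0∞} (hG : AEMeasurable G μ)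
    {M : ℝ≥0∞} (hGM : ∀ x, G x ≤ M) {p q : ℝ} (hp : 0 ≤ p) (hpq : p ≤ q) :
    ∫⁻ x, G x ^ q ∂μ ≤ M ^ (q - p) * ∫⁻ x, G x ^ p ∂μ := by
  calc ∫⁻ x, G x ^ q ∂μ = ∫⁻ x, G x ^ (q - p) * G x ^ p ∂μ := by
        simp_rw [← ENNReal.rpow_add_of_nonneg _ _ (sub_nonneg.mpr hpq) hp, sub_add_cancel]
    _ ≤ ∫⁻ x, M ^ (q - p) * G x ^ p ∂μ := by
        gcongr with x
        exact hGM x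
    _ = M ^ (q - p) * ∫⁻ x, G x ^ p ∂μ := lintegral_const_mul'' _ (hG.pow_const p)

/-- Hölder's inequality against the weight `w`, with `w = w ^ (1/q) * w ^ (1/p)`. -/
theorem lintegral_mul_rpow_le {w F : β → ℝ≥0∞} (hw : AEMeasurable w ν) (hF : AEMeasurable F ν)
    {p q : ℝ} (hpq : p.HolderConjugate q) :
    (∫⁻ y, w y * F y ∂ν) ^ p ≤ (∫⁻ y, w y ∂ν) ^ (p - 1) * ∫⁻ y, w y * F y ^ p ∂ν := by
  have hp := hpq.pos
  have hq := hpq.symm.pos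
  have hsplit : ∀ y, w y * F y = w y ^ (1 / q) * (w y ^ (1 / p) * F y) := fun y => by
    rw [← mul_assoc, ← ENNReal.rpow_add_of_nonneg _ _ (by positivity) (by positivity),
      one_div, one_div, add_comm, hpq.inv_add_inv_eq_one, ENNReal.rpow_one]
  have hHolder := ENNReal.lintegral_mul_le_Lp_mul_Lq ν hpq.symm
    (hw.pow_const (1 / q)) ((hw.pow_const (1 / p)).mul hF)
  simp only [Pi.mul_apply, ← ENNReal.rpow_mul, one_div_mul_cancel hq.ne', ENNReal.rpow_one,
    ENNReal.mul_rpow_of_nonneg _ _ hp.le, one_div_mul_cancel hp.ne', ← hsplit] at hHolder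
  calc (∫⁻ y, w y * F y ∂ν) ^ p
      ≤ ((∫⁻ y, w y ∂ν) ^ (1 / q) * (∫⁻ y, w y * F y ^ p ∂ν) ^ (1 / p)) ^ p := by gcongr
    _ = (∫⁻ y, w y ∂ν) ^ (p - 1) * ∫⁻ y, w y * F y ^ p ∂ν := by
      rw [ENNReal.mul_rpow_of_nonneg _ _ hp.le, ← ENNReal.rpow_mul, ← ENNReal.rpow_mul,
        one_div_mul_cancel hp.ne', ENNReal.rpow_one, one_div_mul_eq_div, hpq.div_conj_eq_sub_one]

variable [SFinite μ] [SFinite ν] {K : α → β → ℝ≥0∞} {F : β → ℝ≥0∞}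

theorem lintegral_rpow_lintegral_mul_le_of_schur (hK : Measurable (Function.uncurry K))
    (hF : AEMeasurable F ν) {p q : ℝ} (hpq : p.HolderConjugate q) {A : ℝ≥0∞}
    (hrow : ∀ x, ∫⁻ y, K x y ∂ν ≤ A) (hcol : ∀ y, ∫⁻ x, K x y ∂μ ≤ A) :
    ∫⁻ x, (∫⁻ y, K x y * F y ∂ν) ^ p ∂μ ≤ A ^ p * ∫⁻ y, F y ^ p ∂ν := by
  have hp := hpq.pos
  have hKF : AEMeasurable (Function.uncurry fun x y => K x y * F y ^ p) (μ.prod ν) :=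
    hK.aemeasurable.mul (hF.pow_const p).comp_snd
  calc ∫⁻ x, (∫⁻ y, K x y * F y ∂ν) ^ p ∂μ
      ≤ ∫⁻ x, A ^ (p - 1) * ∫⁻ y, K x y * F y ^ p ∂ν ∂μ := by
        gcongr with x
        refine (lintegral_mul_rpow_le (hK.of_uncurry_left).aemeasurable hF hpq).trans ?_
        gcongr
        · linarith [hpq.lt]
        · exact hrow x
    _ = A ^ (p - 1) * ∫⁻ y, F y ^ p * ∫⁻ x, K x y ∂μ ∂ν := by
        rw [lintegral_const_mul'' _ hKF.lintegral_prod_right, lintegral_lintegral_swap hKF]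
        simp_rw [mul_comm (K _ _)]
        congr 1
        refine lintegral_congr fun y => ?_
        exact lintegral_const_mul'' _ (hK.of_uncurry_right).aemeasurable
    _ ≤ A ^ (p - 1) * ∫⁻ y, F y ^ p * A ∂ν := by
        gcongr with y
        exact hcol y
    _ = A ^ p * ∫⁻ y, F y ^ p ∂ν := by
        rw [lintegral_mul_const'' _ (hF.pow_const p), mul_comm _ A, ← mul_assoc]
        nth_rw 2 [← ENNReal.rpow_one A]
        rw [← ENNReal.rpow_add_of_nonneg _ _ (by linarith [hpq.lt]) zero_le_one, sub_add_cancel]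

theorem lintegral_rpow_lintegral_mul_le (hK : Measurable (Function.uncurry K))
    (hF : AEMeasurable F ν) {p q : ℝ} (hpq : p.HolderConjugate q) (hp2 : p ≤ 2) {A B : ℝ≥0∞}
    (hrow : ∀ x, ∫⁻ y, K x y ∂ν ≤ A) (hcol : ∀ y, ∫⁻ x, K x y ∂μ ≤ A)
    (hrowq : ∀ x, ∫⁻ y, K x y ^ q ∂ν ≤ B) :
    ∫⁻ x, (∫⁻ y, K x y * F y ∂ν) ^ q ∂μ ≤ A ^ p * B ^ (2 - p) * (∫⁻ y, F y ^ p ∂ν) ^ (q / p) := by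
  have hp := hpq.pos
  have hq := hpq.symm.pos
  have hconj := hpq.sub_one_mul_conj
  have hpq' : p ≤ q := by nlinarith [hpq.lt]
  set I := ∫⁻ y, F y ^ p ∂ν
  have hsup : ∀ x, ∫⁻ y, K x y * F y ∂ν ≤ B ^ (1 / q) * I ^ (1 / p) := fun x =>
    (ENNReal.lintegral_mul_le_Lp_mul_Lq ν hpq.symm (hK.of_uncurry_left).aemeasurable hF).trans
      (by gcongr; exact hrowq x)
  have hG : AEMeasurable (fun x => ∫⁻ y, K x y * F y ∂ν) μ :=
    (hK.aemeasurable.mul hF.comp_snd).lintegral_prod_right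
  calc ∫⁻ x, (∫⁻ y, K x y * F y ∂ν) ^ q ∂μ
      ≤ (B ^ (1 / q) * I ^ (1 / p)) ^ (q - p) * ∫⁻ x, (∫⁻ y, K x y * F y ∂ν) ^ p ∂μ :=
        lintegral_rpow_le_mul_lintegral_rpow hG hsup hp.le hpq'
    _ ≤ (B ^ (1 / q) * I ^ (1 / p)) ^ (q - p) * (A ^ p * I) := by
        gcongr
        exact lintegral_rpow_lintegral_mul_le_of_schur hK hF hpq hrow hcol
    _ = A ^ p * B ^ (2 - p) * I ^ (q / p) := by
        have hB : 1 / q * (q - p) = 2 - p := by field_simp; linarith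
        have hI : 1 / p * (q - p) + 1 = q / p := by field_simp; ring
        rw [ENNReal.mul_rpow_of_nonneg _ _ (sub_nonneg.2 hpq'), ← ENNReal.rpow_mul,
          ← ENNReal.rpow_mul, hB, ← hI, ENNReal.rpow_add_of_nonneg _ _ (by positivity) zero_le_one,
          ENNReal.rpow_one]
        ring

theorem eLpNorm_integral_smul_le {E : Type*} [NormedAddCommGroup E] [NormedSpace ℝ E]
    {k : α → β → ℝ} (hk : Measurable (Function.uncurry k)) {f : β → E}
    (hf : AEStronglyMeasurable f ν) {p q : ℝ} (hpq : p.HolderConjugate q) (hp2 : p ≤ 2)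
    {A B : ℝ≥0∞} (hrow : ∀ x, ∫⁻ y, ‖k x y‖ₑ ∂ν ≤ A) (hcol : ∀ y, ∫⁻ x, ‖k x y‖ₑ ∂μ ≤ A)
    (hrowq : ∀ x, ∫⁻ y, ‖k x y‖ₑ ^ q ∂ν ≤ B) :
    eLpNorm (fun x => ∫ y, k x y • f y ∂ν) (ENNReal.ofReal q) μ ≤
      A ^ (p - 1) * B ^ ((2 - p) / q) * eLpNorm f (ENNReal.ofReal p) ν := by
  have hp := hpq.pos
  have hq := hpq.symm.pos
  rw [eLpNorm_eq_lintegral_rpow_enorm_toReal (by simpa using hq) ENNReal.ofReal_ne_top,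
    eLpNorm_eq_lintegral_rpow_enorm_toReal (by simpa using hp) ENNReal.ofReal_ne_top,
    ENNReal.toReal_ofReal hq.le, ENNReal.toReal_ofReal hp.le]
  calc (∫⁻ x, ‖∫ y, k x y • f y ∂ν‖ₑ ^ q ∂μ) ^ (1 / q)
      ≤ (∫⁻ x, (∫⁻ y, ‖k x y‖ₑ * ‖f y‖ₑ ∂ν) ^ q ∂μ) ^ (1 / q) := by
        gcongr with x
        refine (enorm_integral_le_lintegral_enorm _).trans_eq ?_
        simp_rw [enorm_smul]
    _ ≤ (A ^ p * B ^ (2 - p) * (∫⁻ y, ‖f y‖ₑ ^ p ∂ν) ^ (q / p)) ^ (1 / q) := by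
        gcongr
        exact lintegral_rpow_lintegral_mul_le hk.enorm hf.enorm hpq hp2 hrow hcol hrowq
    _ = A ^ (p - 1) * B ^ ((2 - p) / q) * (∫⁻ y, ‖f y‖ₑ ^ p ∂ν) ^ (1 / p) := by
        rw [ENNReal.mul_rpow_of_nonneg _ _ (by positivity),
          ENNReal.mul_rpow_of_nonneg _ _ (by positivity), ← ENNReal.rpow_mul, ← ENNReal.rpow_mul,
          ← ENNReal.rpow_mul, mul_one_div, hpq.div_conj_eq_sub_one, mul_one_div, div_mul_div_comm,
          mul_one, mul_comm p, ← div_div, div_self hq.ne']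

end KernelEstimates

theorem Real.Gamma_add_one_sq_le {s : ℝ} (hs : 0 < s + 1 / 2) :
    Gamma (s + 1) ^ 2 ≤ (s + 1 / 2) * Gamma (s + 1 / 2) ^ 2 := by
  have hs' : 0 < s + 3 / 2 := by linarith
  have hmid := convexOn_log_Gamma.2 (mem_Ioi.2 hs) (mem_Ioi.2 hs') (by norm_num : (0 : ℝ) ≤ 1 / 2)
    (by norm_num : (0 : ℝ) ≤ 1 / 2) (by norm_num)
  simp only [smul_eq_mul, Function.comp_apply,
    show 1 / 2 * (s + 1 / 2) + 1 / 2 * (s + 3 / 2) = s + 1 by ring] at hmid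
  have hΓ₀ := Gamma_pos_of_pos (show 0 < s + 1 by linarith)
  have hΓ₁ := Gamma_pos_of_pos hs
  have hΓ₂ := Gamma_pos_of_pos hs'
  have hlog : log (Gamma (s + 1) ^ 2) ≤ log (Gamma (s + 1 / 2) * Gamma (s + 3 / 2)) := by
    rw [log_pow, log_mul hΓ₁.ne' hΓ₂.ne']
    push_cast
    linarith
  rw [log_le_log_iff (by positivity) (by positivity), show s + 3 / 2 = (s + 1 / 2) + 1 by ring,
    Gamma_add_one hs.ne'] at hlog
  linarith

theorem Real.sqrt_pi_mul_Gamma_add_one_le {b : ℝ} (hb : 1 ≤ b) :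
    √π * Gamma (b + 1) ≤ exp 1 * 2 ^ b * Gamma (b + 1 / 2) := by
  have hΓ := Gamma_pos_of_pos (show 0 < b + 1 / 2 by linarith)
  have hbern : 1 + b ≤ 2 ^ b := by
    simpa [one_add_one_eq_two] using
      one_add_mul_self_le_rpow_one_add (show (-1 : ℝ) ≤ 1 by norm_num) hb
  have he : 2 ≤ exp 1 := by linarith [add_one_le_exp 1]
  have hc : π * (b + 1 / 2) ≤ (exp 1 * 2 ^ b) ^ 2 := by
    nlinarith [pi_le_four, mul_le_mul he hbern (by linarith) (by positivity)]
  rw [← pow_le_pow_iff_left₀ (by positivity) (by positivity) two_ne_zero, mul_pow, mul_pow,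
    sq_sqrt pi_pos.le]
  calc π * Gamma (b + 1) ^ 2 ≤ π * ((b + 1 / 2) * Gamma (b + 1 / 2) ^ 2) := by
        gcongr
        exact Gamma_add_one_sq_le (by linarith)
    _ ≤ (exp 1 * 2 ^ b) ^ 2 * Gamma (b + 1 / 2) ^ 2 := by
        rw [← mul_assoc]
        gcongr

theorem Real.two_rpow_div_exp_le_Gamma_two_mul_div {b : ℝ} (hb : 1 ≤ b) :
    2 ^ (b - 1) / exp 1 ≤ Gamma (2 * b) / (Gamma (b + 1) * Gamma b) := by
  have hb0 : 0 < b := by linarith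
  have hΓ := Gamma_pos_of_pos hb0
  have hΓ1 := Gamma_pos_of_pos (show 0 < b + 1 by linarith)
  rw [div_le_div_iff₀ (exp_pos 1) (by positivity)]
  refine le_of_mul_le_mul_right ?_ (sqrt_pos.2 pi_pos)
  calc 2 ^ (b - 1) * (Gamma (b + 1) * Gamma b) * √π
      = 2 ^ (b - 1) * Gamma b * (√π * Gamma (b + 1)) := by ring
    _ ≤ 2 ^ (b - 1) * Gamma b * (exp 1 * 2 ^ b * Gamma (b + 1 / 2)) :=
        mul_le_mul_of_nonneg_left (sqrt_pi_mul_Gamma_add_one_le hb) (by positivity)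
    _ = exp 1 * (2 ^ (b - 1) * 2 ^ b) * (Gamma b * Gamma (b + 1 / 2)) := by ring
    _ = exp 1 * (2 ^ (b - 1) * 2 ^ b * 2 ^ (1 - 2 * b)) * Gamma (2 * b) * √π := by
        rw [Gamma_mul_Gamma_add_half]
        ring
    _ = Gamma (2 * b) * exp 1 * √π := by
        rw [← rpow_add two_pos, ← rpow_add two_pos, show b - 1 + b + (1 - 2 * b) = 0 by ring,
          rpow_zero]
        ring

theorem Real.exp_inv_le_div_sub_one {b : ℝ} (hb : 1 < b) : exp b⁻¹ ≤ b / (b - 1) := by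
  have hpos : 0 < b / (b - 1) := div_pos (by linarith) (by linarith)
  have h := one_sub_inv_le_log_of_pos hpos
  rw [inv_div, show 1 - (b - 1) / b = b⁻¹ by field_simp; ring] at h
  exact (exp_le_exp.2 h).trans_eq (exp_log hpos)

theorem interpolation_const_le {p : ℝ} (hp : 1 < p) (hp2 : p < 2) :
    2 ^ (p - 1) * (2 / (p / (p - 1))) ^ ((2 - p) / (p / (p - 1))) ≤
      ((p / (p - 1)) / 2) ^ (2 / p) *
        (Gamma (2 * p / (2 - p)) / (Gamma (2 / (2 - p)) * Gamma (p / (2 - p)))) ^ (2 / p - 1) := by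
  have hp0 : 0 < p := by linarith
  have hp1 : 0 < p - 1 := by linarith
  have h2p : 0 < 2 - p := by linarith
  set b := p / (2 - p) with hb_def
  have hb : 1 < b := by rw [hb_def, lt_div_iff₀ h2p]; linarith
  have hΓ₁ : 2 * p / (2 - p) = 2 * b := by rw [hb_def]; ring
  have hΓ₂ : 2 / (2 - p) = b + 1 := by rw [hb_def]; field_simp; ring
  have hb1 : b - 1 = 2 * (p - 1) / (2 - p) := by rw [hb_def]; field_simp; ring
  have hq : p / (p - 1) / 2 = b / (b - 1) := by rw [hb1, hb_def]; field_simp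
  have hexp : 2 / p - 1 = b⁻¹ := by rw [hb_def]; field_simp
  have hpb : p - 1 ≤ (b - 1) / b := by rw [hb_def]; field_simp; nlinarith
  rw [hΓ₁, hΓ₂, hq, hexp]
  calc 2 ^ (p - 1) * (2 / (p / (p - 1))) ^ ((2 - p) / (p / (p - 1)))
      ≤ 2 ^ (p - 1) := by
        refine mul_le_of_le_one_right (by positivity) (rpow_le_one (by positivity) ?_ ?_)
        · rw [div_le_one (by positivity), le_div_iff₀ hp1]; linarith
        · positivity
    _ ≤ 2 ^ ((b - 1) / b) := rpow_le_rpow_of_exponent_le one_le_two hpb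
    _ = (2 ^ (b - 1) / exp 1) ^ b⁻¹ * exp b⁻¹ := by
        rw [div_rpow (by positivity) (exp_pos 1).le, exp_one_rpow,
          div_mul_cancel₀ _ (exp_pos _).ne', ← rpow_mul two_pos.le, div_eq_mul_inv]
    _ ≤ (Gamma (2 * b) / (Gamma (b + 1) * Gamma b)) ^ b⁻¹ * (b / (b - 1)) := by
        gcongr ?_ ^ _ * ?_
        · exact two_rpow_div_exp_le_Gamma_two_mul_div hb.le
        · exact exp_inv_le_div_sub_one hb
    _ ≤ (b / (b - 1)) ^ (2 / p) * (Gamma (2 * b) / (Gamma (b + 1) * Gamma b)) ^ b⁻¹ := by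
        rw [mul_comm]
        gcongr
        refine self_le_rpow_of_one_le ?_ ?_
        · rw [le_div_iff₀ (by linarith)]; linarith
        · rw [le_div_iff₀ hp0]; linarith

theorem stmt6 (p : ℝ) (hp : 1 < p) (hp2 : p < 2) (f : ℝ → ℝ)
    (hf : MemLp f (ENNReal.ofReal p)) :
    eLpNorm (fun x => ∫ y, Real.exp (-|x - y|) * f y) (ENNReal.ofReal (p/(p-1))) volume ≤
      ENNReal.ofReal (((p/(p-1))/2) ^ (2/p) *
        (Gamma (2*p/(2-p)) / (Gamma (2/(2-p)) * Gamma (p/(2-p)))) ^ (2/p - 1)) *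
      eLpNorm f (ENNReal.ofReal p) volume := by
  have hpq : p.HolderConjugate (p / (p - 1)) := (holderConjugate_iff_eq_conjExponent hp).2 rfl
  have hrow (x : ℝ) : ∫⁻ y, ‖exp (-|x - y|)‖ₑ = ENNReal.ofReal 2 := by
    simpa using lintegral_enorm_exp_neg_abs_sub_rpow one_pos x
  have hcol (y : ℝ) : ∫⁻ x, ‖exp (-|x - y|)‖ₑ = ENNReal.ofReal 2 := by
    simp_rw [abs_sub_comm _ y]
    exact hrow y
  have hq := hpq.symm.pos
  refine (eLpNorm_integral_smul_le (by fun_prop) hf.1 hpq hp2.le (fun x => (hrow x).le)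
    (fun y => (hcol y).le) (fun x => (lintegral_enorm_exp_neg_abs_sub_rpow hq x).le)).trans ?_
  rw [ENNReal.ofReal_rpow_of_pos two_pos, ENNReal.ofReal_rpow_of_pos (div_pos two_pos hq),
    ← ENNReal.ofReal_mul (by positivity)]
  gcongr ENNReal.ofReal ?_ * _
  exact interpolation_const_le hp hp2
end

section
/- Bilinear form of Young's inequality for the exponential kernel: For 1 < p < 2 and p' = p/(p-1), every h ∈ L^p(ℝ) satisfies | ∫_{ℝ×ℝ} h(u) e^{-(2/p')|u-v|} h(v) du dv | ≤ (2/p') A_p ‖h‖_{L^p(ℝ)}², where A_p = (p'/2)^{2/p} [ Γ(2p/(2-p)) / (Γ(2/(2-p)) Γ(p/(2-p))) ]^{2/p - 1}. -/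
/-!
With `s` the Young exponent (`1/s + 2/p = 2`), the kernel `k x = e^{-(2/p')|x|}` satisfies
`k^s = e^{-|x|}`, so `‖k‖_s = 2^{1/s} = 2^{2 - 2/p}`. Young's inequality for the bilinear form,
`∫∫ f(u) k(u - v) f(v) ≤ ‖k‖_s ‖f‖_p²`, follows from the pointwise AM-GM bound
`f(u) f(v) ≤ (f(u)^p f(v)^{2-p} + f(u)^{2-p} f(v)^p) / 2`, the symmetry of `k`, and Hölder's
inequality in `v` with exponents `s` and `p / (2 - p)`.

It remains to compare constants. Writing `b = p / (2 - p) > 1`, the claimed constant is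
`(b Γ(2b) / ((b - 1) Γ(b + 1) Γ(b)))^{1/b}` and `2^{2 - 2/p} = (2^{b-1})^{1/b}`. Legendre's
duplication formula together with `Γ(3/2) Γ(b) ≤ Γ(b + 1/2)` (log-convexity of `Γ`) gives
`Γ(2b) ≥ 4^{b-1} Γ(b)²`, and the comparison reduces to `b - 1 ≤ 2^{b-1}`.
-/

open MeasureTheory Real Set
open scoped ENNReal

theorem ENNReal.two_mul_le_add_sq (a b : ℝ≥0∞) : 2 * a * b ≤ a ^ 2 + b ^ 2 := by
  rcases eq_or_ne a ⊤ with rfl | ha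
  · simp
  rcases eq_or_ne b ⊤ with rfl | hb
  · simp
  lift a to NNReal using ha
  lift b to NNReal using hb
  exact_mod_cast _root_.two_mul_le_add_sq a b

theorem ENNReal.two_mul_mul_le_rpow_add {t : ℝ} (ht0 : 0 ≤ t) (ht2 : t ≤ 2) (a b : ℝ≥0∞) :
    2 * (a * b) ≤ a ^ t * b ^ (2 - t) + a ^ (2 - t) * b ^ t := by
  have hsq (x : ℝ≥0∞) (r : ℝ) : (x ^ r) ^ 2 = x ^ (2 * r) := by
    rw [← ENNReal.rpow_natCast, ← ENNReal.rpow_mul, mul_comm]; norm_num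
  have hone (x : ℝ≥0∞) : x ^ (t / 2) * x ^ (1 - t / 2) = x := by
    rw [← ENNReal.rpow_add_of_nonneg _ _ (by linarith) (by linarith), add_sub_cancel,
      ENNReal.rpow_one]
  have key := ENNReal.two_mul_le_add_sq (a ^ (t / 2) * b ^ (1 - t / 2))
    (a ^ (1 - t / 2) * b ^ (t / 2))
  rwa [mul_assoc, mul_mul_mul_comm, hone, mul_comm (b ^ _), hone, mul_pow, mul_pow, hsq, hsq,
    hsq, hsq, mul_div_cancel₀ _ two_ne_zero, mul_sub, mul_div_cancel₀ _ two_ne_zero, mul_one] at key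

theorem eLpNorm'_ennreal {α : Type*} [MeasurableSpace α] {μ : Measure α} (f : α → ℝ≥0∞) (q : ℝ) :
    eLpNorm' f q μ = (∫⁻ x, f x ^ q ∂μ) ^ (1 / q) := by
  simp only [eLpNorm', enorm_eq_self]

theorem lintegral_lintegral_mul_mul_le_rpow_mul_mul_rpow {α : Type*} [MeasurableSpace α]
    {μ : Measure α} [SFinite μ] {t : ℝ} (ht0 : 0 ≤ t) (ht2 : t ≤ 2) {f : α → ℝ≥0∞}
    {K : α → α → ℝ≥0∞} (hf : AEMeasurable f μ) (hK : AEMeasurable (Function.uncurry K) (μ.prod μ))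
    (hK_symm : ∀ u v, K u v = K v u) :
    ∫⁻ u, ∫⁻ v, f u * K u v * f v ∂μ ∂μ ≤ ∫⁻ u, ∫⁻ v, f u ^ t * K u v * f v ^ (2 - t) ∂μ ∂μ := by
  set X : α → α → ℝ≥0∞ := fun u v => f u ^ t * K u v * f v ^ (2 - t)
  set Y : α → α → ℝ≥0∞ := fun u v => f u ^ (2 - t) * K u v * f v ^ t
  have hXm : AEMeasurable (Function.uncurry X) (μ.prod μ) :=
    ((hf.comp_fst.pow_const _).mul hK).mul (hf.comp_snd.pow_const _)
  have hYm : AEMeasurable (Function.uncurry Y) (μ.prod μ) :=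
    ((hf.comp_fst.pow_const _).mul hK).mul (hf.comp_snd.pow_const _)
  -- the pointwise AM-GM bound has the two halves `X`, `Y`, exchanged by `u ↔ v`
  have hYX : ∫⁻ u, ∫⁻ v, Y u v ∂μ ∂μ = ∫⁻ u, ∫⁻ v, X u v ∂μ ∂μ := by
    rw [lintegral_lintegral_swap hYm]
    refine lintegral_congr fun u => lintegral_congr fun v => ?_
    simp only [X, Y, hK_symm v u]
    ring
  have hamgm (u v : α) : 2 * (f u * K u v * f v) ≤ X u v + Y u v :=
    calc 2 * (f u * K u v * f v) = K u v * (2 * (f u * f v)) := by ring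
      _ ≤ K u v * (f u ^ t * f v ^ (2 - t) + f u ^ (2 - t) * f v ^ t) := by
          gcongr; exact ENNReal.two_mul_mul_le_rpow_add ht0 ht2 (f u) (f v)
      _ = X u v + Y u v := by simp only [X, Y]; ring
  refine (ENNReal.mul_le_mul_iff_right two_ne_zero ENNReal.ofNat_ne_top).1 ?_
  calc 2 * ∫⁻ u, ∫⁻ v, f u * K u v * f v ∂μ ∂μ
      = ∫⁻ u, ∫⁻ v, 2 * (f u * K u v * f v) ∂μ ∂μ := by
        simp only [lintegral_const_mul' _ _ ENNReal.ofNat_ne_top]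
    _ ≤ ∫⁻ u, ∫⁻ v, X u v + Y u v ∂μ ∂μ := by gcongr with u v; exact hamgm u v
    _ = ∫⁻ z, Function.uncurry X z + Function.uncurry Y z ∂μ.prod μ :=
        (lintegral_prod _ (hXm.add hYm)).symm
    _ = 2 * ∫⁻ u, ∫⁻ v, X u v ∂μ ∂μ := by
        rw [lintegral_add_left' hXm, lintegral_prod _ hXm, lintegral_prod _ hYm, two_mul]
        exact congrArg₂ _ rfl hYX

section Young

variable {G : Type*} [MeasurableSpace G] [AddGroup G] [MeasurableAdd G] [MeasurableSub₂ G]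
  {μ : Measure G} [μ.IsAddRightInvariant]

theorem lintegral_sub_right_mul_le {s r : ℝ} (hsr : s.HolderConjugate r) {k g : G → ℝ≥0∞}
    (hk : Measurable k) (hg : AEMeasurable g μ) (u : G) :
    ∫⁻ v, k (v - u) * g v ∂μ ≤ eLpNorm' k s μ * eLpNorm' g r μ := by
  calc ∫⁻ v, k (v - u) * g v ∂μ
      ≤ (∫⁻ v, k (v - u) ^ s ∂μ) ^ (1 / s) * (∫⁻ v, g v ^ r ∂μ) ^ (1 / r) :=
        ENNReal.lintegral_mul_le_Lp_mul_Lq μ hsr (hk.comp (measurable_sub_const u)).aemeasurable hg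
    _ = eLpNorm' k s μ * eLpNorm' g r μ := by
        rw [lintegral_sub_right_eq_self (fun x => k x ^ s) u, eLpNorm'_ennreal, eLpNorm'_ennreal]

theorem lintegral_lintegral_mul_kernel_mul_le [SFinite μ] {p s : ℝ} (hp : 1 < p) (hp2 : p < 2)
    (hps : s⁻¹ + 2 * p⁻¹ = 2) {f k : G → ℝ≥0∞} (hf : AEMeasurable f μ) (hk : Measurable k)
    (hk_neg : ∀ x, k (-x) = k x) :
    ∫⁻ u, ∫⁻ v, f u * k (u - v) * f v ∂μ ∂μ ≤ eLpNorm' k s μ * eLpNorm' f p μ ^ 2 := by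
  have hp0 : 0 < p := by linarith
  have hsr : s.HolderConjugate (p / (2 - p)) :=
    ⟨by rw [inv_div, inv_one, show (2 - p) / p = 2 * p⁻¹ - 1 by field_simp]; linarith,
      inv_pos.1 (by rw [show s⁻¹ = 2 - 2 * p⁻¹ by linarith]; nlinarith [inv_lt_one_of_one_lt₀ hp]),
      div_pos hp0 (by linarith)⟩
  set J := ∫⁻ x, f x ^ p ∂μ
  have hinner (u : G) :
      ∫⁻ v, k (u - v) * f v ^ (2 - p) ∂μ ≤ eLpNorm' k s μ * J ^ ((2 - p) / p) := by
    have hgr : eLpNorm' (fun v => f v ^ (2 - p)) (p / (2 - p)) μ = J ^ ((2 - p) / p) := by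
      simp only [eLpNorm'_ennreal, ← ENNReal.rpow_mul, one_div_div]
      rw [mul_div_cancel₀ _ (by linarith : 2 - p ≠ 0)]
    simp only [← hk_neg (u - _), neg_sub]
    exact hgr ▸ lintegral_sub_right_mul_le hsr hk (hf.pow_const _) u
  calc ∫⁻ u, ∫⁻ v, f u * k (u - v) * f v ∂μ ∂μ
      ≤ ∫⁻ u, ∫⁻ v, f u ^ p * k (u - v) * f v ^ (2 - p) ∂μ ∂μ :=
        lintegral_lintegral_mul_mul_le_rpow_mul_mul_rpow hp0.le hp2.le hf
          (hk.comp measurable_sub).aemeasurable fun u v => by rw [← hk_neg, neg_sub]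
    _ = ∫⁻ u, f u ^ p * ∫⁻ v, k (u - v) * f v ^ (2 - p) ∂μ ∂μ := by
        refine lintegral_congr fun u => ?_
        simp only [mul_assoc]
        exact lintegral_const_mul'' _
          ((hk.comp (measurable_const.sub measurable_id)).aemeasurable.mul (hf.pow_const _))
    _ ≤ ∫⁻ u, f u ^ p * (eLpNorm' k s μ * J ^ ((2 - p) / p)) ∂μ := by
        gcongr with u; exact hinner u
    _ = J * (eLpNorm' k s μ * J ^ ((2 - p) / p)) := lintegral_mul_const'' _ (hf.pow_const _)
    _ = eLpNorm' k s μ * eLpNorm' f p μ ^ 2 := by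
        rw [eLpNorm'_ennreal f, ← ENNReal.rpow_mul_natCast, mul_left_comm,
          show 1 / p * (2 : ℕ) = 1 + (2 - p) / p by field_simp; ring,
          ENNReal.rpow_add_of_nonneg _ _ zero_le_one (div_nonneg (by linarith) hp0.le),
          ENNReal.rpow_one]

theorem abs_integral_integral_mul_kernel_mul_le [SFinite μ] {p s : ℝ} (hp : 1 < p) (hp2 : p < 2)
    (hps : s⁻¹ + 2 * p⁻¹ = 2) {h K : G → ℝ} (hh : MemLp h (ENNReal.ofReal p) μ)
    (hKm : Measurable K) (hK : MemLp K (ENNReal.ofReal s) μ) (hK_neg : ∀ x, K (-x) = K x) :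
    |∫ u, ∫ v, h u * K (u - v) * h v ∂μ ∂μ| ≤
      (eLpNorm K (ENNReal.ofReal s) μ).toReal * (eLpNorm h (ENNReal.ofReal p) μ).toReal ^ 2 := by
  have hs : 0 < s := inv_pos.1 (by nlinarith [inv_lt_one_of_one_lt₀ hp])
  set F : G × G → ℝ := fun z => h z.1 * K (z.1 - z.2) * h z.2
  have hFm : AEStronglyMeasurable F (μ.prod μ) :=
    (hh.1.comp_fst.mul (hKm.comp measurable_sub).aestronglyMeasurable).mul hh.1.comp_snd
  have hB : ∫⁻ z, ‖F z‖ₑ ∂μ.prod μ ≤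
      eLpNorm K (ENNReal.ofReal s) μ * eLpNorm h (ENNReal.ofReal p) μ ^ 2 := by
    rw [lintegral_prod _ hFm.enorm, eLpNorm_eq_eLpNorm' (by simpa using hs) ENNReal.ofReal_ne_top,
      eLpNorm_eq_eLpNorm' (by simp; linarith) ENNReal.ofReal_ne_top, ENNReal.toReal_ofReal hs.le,
      ENNReal.toReal_ofReal (by linarith), ← eLpNorm'_enorm (f := K), ← eLpNorm'_enorm (f := h)]
    simp only [F, enorm_mul]
    exact lintegral_lintegral_mul_kernel_mul_le hp hp2 hps hh.1.enorm hKm.enorm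
      fun x => by rw [hK_neg]
  have hfin : eLpNorm K (ENNReal.ofReal s) μ * eLpNorm h (ENNReal.ofReal p) μ ^ 2 ≠ ⊤ :=
    ENNReal.mul_ne_top hK.eLpNorm_ne_top (ENNReal.pow_ne_top hh.eLpNorm_ne_top)
  have hF : Integrable F (μ.prod μ) := ⟨hFm, hB.trans_lt hfin.lt_top⟩
  calc |∫ u, ∫ v, h u * K (u - v) * h v ∂μ ∂μ| = ‖∫ z, F z ∂μ.prod μ‖ := by
        rw [integral_integral hF, Real.norm_eq_abs]
    _ ≤ (∫⁻ z, ‖F z‖ₑ ∂μ.prod μ).toReal := by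
        rw [← toReal_enorm]
        exact ENNReal.toReal_mono (hB.trans_lt hfin.lt_top).ne (enorm_integral_le_lintegral_enorm F)
    _ ≤ _ := by
        simpa only [ENNReal.toReal_mul, ENNReal.toReal_pow] using ENNReal.toReal_mono hfin hB

end Young

theorem integral_exp_neg_mul_abs_s7 {a : ℝ} (ha : 0 < a) : ∫ x : ℝ, exp (-a * |x|) = 2 / a := by
  rw [integral_comp_abs (f := fun x => exp (-a * x)), integral_exp_mul_Ioi (neg_neg_of_pos ha)]
  field_simp
  simp

theorem eLpNorm_exp_neg_mul_abs {c s : ℝ} (hc : 0 < c) (hs : 0 < s) :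
    eLpNorm (fun x : ℝ => exp (-c * |x|)) (ENNReal.ofReal s) =
      ENNReal.ofReal ((2 / (c * s)) ^ s⁻¹) := by
  have hint : Integrable fun x : ℝ => exp (-(c * s) * |x|) :=
    Integrable.of_integral_ne_zero (by rw [integral_exp_neg_mul_abs_s7 (by positivity)]; positivity)
  rw [eLpNorm_eq_lintegral_rpow_enorm_toReal (by simpa using hs) ENNReal.ofReal_ne_top,
    ENNReal.toReal_ofReal hs.le, one_div,
    ← ENNReal.ofReal_rpow_of_nonneg (by positivity) (by positivity),
    ← integral_exp_neg_mul_abs_s7 (by positivity), ofReal_integral_eq_lintegral_ofReal hint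
      (.of_forall fun _ => (exp_pos _).le)]
  congr 1
  refine lintegral_congr fun x => ?_
  rw [enorm_of_nonneg (exp_pos _).le, ENNReal.ofReal_rpow_of_nonneg (exp_pos _).le hs.le, ← exp_mul]
  ring_nf

theorem memLp_exp_neg_mul_abs {c s : ℝ} (hc : 0 < c) (hs : 0 < s) :
    MemLp (fun x : ℝ => exp (-c * |x|)) (ENNReal.ofReal s) :=
  ⟨by fun_prop, by rw [eLpNorm_exp_neg_mul_abs hc hs]; exact ENNReal.ofReal_lt_top⟩

namespace Real

theorem le_two_rpow {x : ℝ} (hx : 0 ≤ x) : x ≤ 2 ^ x := by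
  rcases le_or_gt 1 x with h1 | h1
  · have := one_add_mul_self_le_rpow_one_add (s := 1) (by norm_num) h1
    norm_num at this
    linarith
  · exact h1.le.trans (one_le_rpow one_le_two hx)

theorem Gamma_three_halves_mul_Gamma_le {b : ℝ} (hb : 1 < b) :
    Gamma (3 / 2) * Gamma b ≤ Gamma (b + 1 / 2) := by
  set t := 1 / (2 * b - 1)
  have htb : t * (2 * b - 1) = 1 := by simp only [t]; field_simp [(by linarith : 2 * b - 1 ≠ 0)]
  have ht : 0 < t := by simp only [t]; exact one_div_pos.2 (by linarith)
  have ht1 : t < 1 := by nlinarith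
  have hc : 0 < b + 1 / 2 := by linarith
  -- log-convexity of Γ at `1` and `b + 1/2`, which `3/2` and `b` split with weights `t`, `1 - t`
  have h32 := Gamma_mul_add_mul_le_rpow_Gamma_mul_rpow_Gamma one_pos hc
    (sub_pos.2 ht1) ht (sub_add_cancel 1 t)
  have hb' := Gamma_mul_add_mul_le_rpow_Gamma_mul_rpow_Gamma one_pos hc
    ht (sub_pos.2 ht1) (add_sub_cancel t 1)
  rw [show (1 - t) * 1 + t * (b + 1 / 2) = 3 / 2 by linear_combination htb / 2, Gamma_one,
    one_rpow, one_mul] at h32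
  rw [show t * 1 + (1 - t) * (b + 1 / 2) = b by linear_combination -htb / 2, Gamma_one,
    one_rpow, one_mul] at hb'
  calc Gamma (3 / 2) * Gamma b ≤ Gamma (b + 1 / 2) ^ t * Gamma (b + 1 / 2) ^ (1 - t) :=
        mul_le_mul h32 hb' (Gamma_pos_of_pos (by linarith)).le (by positivity)
    _ = Gamma (b + 1 / 2) := by rw [← rpow_add (Gamma_pos_of_pos hc), add_sub_cancel, rpow_one]

theorem Gamma_three_halves : Gamma (3 / 2) = √π / 2 := by
  rw [show (3 / 2 : ℝ) = 1 / 2 + 1 by norm_num, Gamma_add_one (by norm_num), Gamma_one_half_eq]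
  ring

theorem four_rpow_mul_Gamma_sq_le {b : ℝ} (hb : 1 < b) :
    4 ^ (b - 1) * Gamma b ^ 2 ≤ Gamma (2 * b) := by
  have hX : 0 < (2 : ℝ) ^ (1 - 2 * b) * √π := by positivity
  have h4 : (4 : ℝ) ^ (b - 1) * 2 ^ (1 - 2 * b) = 1 / 2 := by
    rw [show (4 : ℝ) = 2 ^ (2 : ℝ) by norm_num, ← rpow_mul zero_le_two, ← rpow_add two_pos,
      show 2 * (b - 1) + (1 - 2 * b) = -1 by ring, rpow_neg_one]
    norm_num
  refine le_of_mul_le_mul_right ?_ hX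
  calc 4 ^ (b - 1) * Gamma b ^ 2 * (2 ^ (1 - 2 * b) * √π) = Gamma (3 / 2) * Gamma b * Gamma b := by
        rw [Gamma_three_halves]; linear_combination (Gamma b ^ 2 * √π) * h4
    _ ≤ Gamma (b + 1 / 2) * Gamma b :=
        mul_le_mul_of_nonneg_right (Gamma_three_halves_mul_Gamma_le hb)
          (Gamma_pos_of_pos (by linarith)).le
    _ = Gamma (2 * b) * (2 ^ (1 - 2 * b) * √π) := by
        rw [mul_comm, Gamma_mul_Gamma_add_half, mul_assoc]

theorem two_rpow_le_Gamma_two_mul_div {b : ℝ} (hb : 1 < b) :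
    2 ^ (b - 1) ≤ b / (b - 1) * (Gamma (2 * b) / (Gamma (b + 1) * Gamma b)) := by
  have hΓ : 0 < Gamma b := Gamma_pos_of_pos (by linarith)
  have h4 : (4 : ℝ) ^ (b - 1) = 2 ^ (b - 1) * 2 ^ (b - 1) := by
    rw [← mul_rpow zero_le_two zero_le_two]; norm_num
  rw [Gamma_add_one (by linarith), show b / (b - 1) * (Gamma (2 * b) / (b * Gamma b * Gamma b)) =
    Gamma (2 * b) / ((b - 1) * Gamma b ^ 2) by field_simp,
    le_div_iff₀ (mul_pos (by linarith) (pow_pos hΓ 2))]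
  calc 2 ^ (b - 1) * ((b - 1) * Gamma b ^ 2) ≤ 2 ^ (b - 1) * 2 ^ (b - 1) * Gamma b ^ 2 := by
        rw [← mul_assoc]; gcongr; exact le_two_rpow (by linarith)
    _ ≤ Gamma (2 * b) := h4 ▸ four_rpow_mul_Gamma_sq_le hb

end Real

theorem two_rpow_two_sub_le {p : ℝ} (hp : 1 < p) (hp2 : p < 2) :
    (2 : ℝ) ^ (2 - 2 / p) ≤ (2 / (p / (p - 1))) * (((p / (p - 1)) / 2) ^ (2 / p) *
      (Gamma (2 * p / (2 - p)) / (Gamma (2 / (2 - p)) * Gamma (p / (2 - p)))) ^ (2 / p - 1)) := by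
  have h2p : 2 - p ≠ 0 := by linarith
  set b := p / (2 - p) with hb_def
  have hb : 1 < b := by rw [hb_def, lt_div_iff₀ (by linarith)]; linarith
  have hbp : b * (2 - p) = p := by rw [hb_def]; field_simp
  rw [show 2 * p / (2 - p) = 2 * b by ring, show 2 / (2 - p) = b + 1 by field_simp; linarith,
    show 2 / p = (b + 1) / b by field_simp; linarith, show p / (p - 1) = 2 * b / (b - 1) by
      rw [div_eq_div_iff (by linarith) (by linarith)]; linear_combination hbp,
    show (b + 1) / b - 1 = 1 / b by field_simp; ring, show 2 - (b + 1) / b = (b - 1) / b by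
      field_simp; ring]
  set G := Gamma (2 * b) / (Gamma (b + 1) * Gamma b)
  have hq : 0 < b / (b - 1) := div_pos (by linarith) (by linarith)
  have hG : 0 ≤ G := div_nonneg (Gamma_pos_of_pos (by linarith)).le
    (mul_pos (Gamma_pos_of_pos (by linarith)) (Gamma_pos_of_pos (by linarith))).le
  have hRHS : 2 / (2 * b / (b - 1)) * ((2 * b / (b - 1) / 2) ^ ((b + 1) / b) * G ^ (1 / b)) =
      (b / (b - 1) * G) ^ (1 / b) := by
    rw [show (b + 1) / b = 1 + 1 / b by field_simp, mul_rpow hq.le hG,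
      show 2 * b / (b - 1) / 2 = b / (b - 1) by ring, rpow_add hq, rpow_one]
    field_simp [(by linarith : b - 1 ≠ 0)]
  rw [hRHS, show (b - 1) / b = (b - 1) * (1 / b) by ring, rpow_mul zero_le_two]
  gcongr
  exact two_rpow_le_Gamma_two_mul_div hb

theorem stmt7 (p : ℝ) (hp : 1 < p) (hp2 : p < 2) (h : ℝ → ℝ)
    (hh : MemLp h (ENNReal.ofReal p)) :
    |∫ u, ∫ v, h u * Real.exp (-(2/(p/(p-1))) * |u - v|) * h v| ≤
      (2/(p/(p-1))) *
      (((p/(p-1))/2) ^ (2/p) *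
        (Gamma (2*p/(2-p)) / (Gamma (2/(2-p)) * Gamma (p/(2-p)))) ^ (2/p - 1)) *
      (∫ x, |h x| ^ p) ^ (2/p) := by
  have hp0 : 0 < p := by linarith
  set c := 2 / (p / (p - 1))
  set s := p / (2 * (p - 1))
  have hc : 0 < c := div_pos two_pos (div_pos hp0 (by linarith))
  have hs : 0 < s := div_pos hp0 (by linarith)
  have hcs : c * s = 1 := by simp only [c, s]; field_simp [(by linarith : p - 1 ≠ 0)]
  have hps : s⁻¹ + 2 * p⁻¹ = 2 := by simp only [s]; field_simp; ring
  have hh2 : (eLpNorm h (ENNReal.ofReal p)).toReal ^ 2 = (∫ x, |h x| ^ p) ^ (2 / p) := by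
    rw [hh.eLpNorm_eq_integral_rpow_norm (by simpa using hp0) ENNReal.ofReal_ne_top,
      ENNReal.toReal_ofReal hp0.le, ENNReal.toReal_ofReal (by positivity),
      ← rpow_natCast, ← rpow_mul (by positivity)]
    simp only [norm_eq_abs]
    ring_nf
  have key := abs_integral_integral_mul_kernel_mul_le (μ := volume) hp hp2 hps hh
    (K := fun x => exp (-c * |x|)) (by fun_prop) (memLp_exp_neg_mul_abs hc hs)
    fun x => by rw [abs_neg]
  rw [eLpNorm_exp_neg_mul_abs hc hs, hcs, hh2, ENNReal.toReal_ofReal (by positivity), div_one,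
    show s⁻¹ = 2 - 2 / p by rw [div_eq_mul_inv]; linarith] at key
  exact key.trans (by gcongr; exact two_rpow_two_sub_le hp hp2)
end
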